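/- Let K be a symmetric positive definite p×p matrix with inverse Σ, and let A* = argmin over p×p matrices A with zero diagonal of ‖Σ^{1/2}(I - A)‖_F². Then A* = KΔ + I, where Δ is the diagonal matrix with entries Δ_{jj} = -1/K_{jj}. -/

import Mathlib

/-!
With `S = Σ^{1/2}` the objective is `f A = ‖S (I - A)‖_F²`. The candidate `Θ = KΔ + I` has zero
diagonal and `Σ (I - Θ) = -Δ` is diagonal, so for every zero-diagonal `A` the cross term
`⟪S (I - Θ), S (A - Θ)⟫_F = tr (Σ (I - Θ))ᵀ (A - Θ)` vanishes. Hence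
`f A = f Θ + ‖S (A - Θ)‖_F²`, and the last term is zero only for `A = Θ` because `S` is invertible.
-/

open Matrix

namespace Matrix

variable {m n : Type*} [Fintype m] [Fintype n]

theorem sum_sum_mul_eq_trace_transpose_mul {R : Type*} [CommSemiring R] (X Y : Matrix m n R) :
    ∑ i, ∑ j, X i j * Y i j = trace (Xᵀ * Y) := by
  simp only [trace, diag, mul_apply, transpose_apply]
  exact Finset.sum_comm

theorem sum_sum_sq_sub {R : Type*} [CommRing R] (X Y : Matrix m n R) :
    ∑ i, ∑ j, (X - Y) i j ^ 2 =
      ∑ i, ∑ j, X i j ^ 2 - 2 * trace (Xᵀ * Y) + ∑ i, ∑ j, Y i j ^ 2 := by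
  simp only [← sum_sum_mul_eq_trace_transpose_mul, sub_apply, sub_sq, Finset.sum_add_distrib,
    Finset.sum_sub_distrib, Finset.mul_sum, mul_assoc]

theorem eq_zero_of_sum_sum_sq_eq_zero {R : Type*} [Ring R] [LinearOrder R] [IsStrictOrderedRing R]
    {X : Matrix m n R} (h : ∑ i, ∑ j, X i j ^ 2 = 0) : X = 0 := by
  ext i j
  have hrow := (Fintype.sum_eq_zero_iff_of_nonneg fun i => by positivity).1 h
  have hij := (Fintype.sum_eq_zero_iff_of_nonneg fun j => by positivity).1 (congrFun hrow i)
  exact pow_eq_zero_iff two_ne_zero |>.1 (congrFun hij j)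

theorem trace_transpose_mul_eq_zero_of_isDiag {R : Type*} [Semiring R] {X D : Matrix n n R}
    (hX : X.IsDiag) (hD : ∀ j, D j j = 0) : trace (Xᵀ * D) = 0 := by
  refine Finset.sum_eq_zero fun j _ => Finset.sum_eq_zero fun i _ => ?_
  rcases eq_or_ne i j with rfl | hij
  · simp [hD]
  · simp [hX hij]

theorem mul_diagonal_neg_inv_diag_add_one_apply_self [DecidableEq n] {R : Type*} [Field R]
    {K : Matrix n n R} {j : n} (hK : K j j ≠ 0) :
    (K * diagonal (fun j => -1 / K j j) + 1) j j = 0 := by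
  simp only [add_apply, mul_diagonal, one_apply_eq]
  field_simp
  ring

theorem sum_sum_sq_mul_sub_of_isDiag {S X D : Matrix n n ℝ} (hS : Sᵀ = S)
    (hX : (S * S * X).IsDiag) (hD : ∀ j, D j j = 0) :
    ∑ i, ∑ j, (S * (X - D)) i j ^ 2 = ∑ i, ∑ j, (S * X) i j ^ 2 + ∑ i, ∑ j, (S * D) i j ^ 2 := by
  have hcross : trace ((S * X)ᵀ * (S * D)) = 0 := by
    rw [← trace_transpose_mul_eq_zero_of_isDiag hX hD]
    simp only [transpose_mul, hS, Matrix.mul_assoc]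
  rw [Matrix.mul_sub, sum_sum_sq_sub, hcross, mul_zero, sub_zero]

end Matrix

namespace Matrix.IsHermitian

variable {n 𝕜 : Type*} [Fintype n] [DecidableEq n] [RCLike 𝕜] {A : Matrix n n 𝕜}

noncomputable def spectralSqrt (hA : A.IsHermitian) : Matrix n n 𝕜 :=
  (hA.eigenvectorUnitary : Matrix n n 𝕜) *
    diagonal ((RCLike.ofReal : ℝ → 𝕜) ∘ Real.sqrt ∘ hA.eigenvalues) *
    (star hA.eigenvectorUnitary : Matrix n n 𝕜)

theorem spectralSqrt_isHermitian (hA : A.IsHermitian) : hA.spectralSqrt.IsHermitian := by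
  rw [spectralSqrt, star_eq_conjTranspose]
  exact isHermitian_mul_mul_conjTranspose _ <|
    isHermitian_diagonal_of_self_adjoint _ <| funext fun _ => RCLike.conj_ofReal _

theorem spectralSqrt_mul_self (hA : A.IsHermitian) (h : ∀ i, 0 ≤ hA.eigenvalues i) :
    hA.spectralSqrt * hA.spectralSqrt = A := by
  conv_rhs => rw [hA.spectral_theorem, Unitary.conjStarAlgAut_apply]
  have hdiag : diagonal ((RCLike.ofReal : ℝ → 𝕜) ∘ Real.sqrt ∘ hA.eigenvalues) *
      diagonal (RCLike.ofReal ∘ Real.sqrt ∘ hA.eigenvalues) =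
        diagonal (RCLike.ofReal ∘ hA.eigenvalues) := by
    rw [diagonal_mul_diagonal]
    congr 1
    funext i
    simp [← RCLike.ofReal_mul, Real.mul_self_sqrt (h i)]
  have hU : star (hA.eigenvectorUnitary : Matrix n n 𝕜) * hA.eigenvectorUnitary = 1 :=
    Unitary.star_mul_self_of_mem hA.eigenvectorUnitary.2
  simp only [spectralSqrt, Matrix.mul_assoc]
  rw [← Matrix.mul_assoc (star _), hU, Matrix.one_mul, ← Matrix.mul_assoc (diagonal _), hdiag]

end Matrix.IsHermitian

/-- The minimizer over zero-diagonal matrices `A` of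
`‖Sig^{1/2}(I − A)‖_F²` is `Θ = KΔ + I` with `K = Sig⁻¹` and `Δ_{jj} = −1/K_{jj}`:
`Θ` has zero diagonal, is a minimizer, and is the unique one. -/
theorem regression_argmin (p : ℕ) (Sig : Matrix (Fin p) (Fin p) ℝ) (hSig : Sig.PosDef)
    (K : Matrix (Fin p) (Fin p) ℝ) (hK : K = Sig⁻¹)
    (Δ : Matrix (Fin p) (Fin p) ℝ) (hΔ : Δ = diagonal (fun j => -1 / K j j))
    (Θ : Matrix (Fin p) (Fin p) ℝ) (hΘ : Θ = K * Δ + 1)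
    (sqrtSig : Matrix (Fin p) (Fin p) ℝ) (hsqrt : sqrtSig = (hSig.posSemidef.1.eigenvectorUnitary : Matrix (Fin p) (Fin p) ℝ) *
      diagonal ((RCLike.ofReal : ℝ → ℝ) ∘ Real.sqrt ∘ hSig.posSemidef.1.eigenvalues) *
      (star hSig.posSemidef.1.eigenvectorUnitary : Matrix (Fin p) (Fin p) ℝ))
    (f : Matrix (Fin p) (Fin p) ℝ → ℝ)
    (hf : f = fun A => ∑ i, ∑ j, (sqrtSig * (1 - A)) i j ^ 2) :
    (∀ j, Θ j j = 0) ∧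
    (∀ A : Matrix (Fin p) (Fin p) ℝ, (∀ j, A j j = 0) → f Θ ≤ f A) ∧
    (∀ A : Matrix (Fin p) (Fin p) ℝ, (∀ j, A j j = 0) → f A = f Θ → A = Θ) := by
  have hdet : IsUnit Sig.det := hSig.det_pos.ne'.isUnit
  have hSigK : Sig * K = 1 := hK ▸ mul_nonsing_inv _ hdet
  have hKSig : K * Sig = 1 := hK ▸ nonsing_inv_mul _ hdet
  have hS2 : sqrtSig * sqrtSig = Sig :=
    hsqrt ▸ hSig.posSemidef.1.spectralSqrt_mul_self hSig.posSemidef.eigenvalues_nonneg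
  have hSsymm : sqrtSigᵀ = sqrtSig :=
    hsqrt ▸ isHermitian_iff_isSymm.1 hSig.posSemidef.1.spectralSqrt_isHermitian
  have hΘdiag : ∀ j, Θ j j = 0 := fun j =>
    hΘ ▸ hΔ ▸ mul_diagonal_neg_inv_diag_add_one_apply_self (hK ▸ hSig.inv).diag_pos.ne'
  have hresidual : (sqrtSig * sqrtSig * (1 - Θ)).IsDiag := by
    rw [hS2, hΘ, mul_sub, mul_add, ← Matrix.mul_assoc, hSigK, Matrix.one_mul, Matrix.mul_one,
      sub_add_cancel_right, hΔ]
    exact (isDiag_diagonal _).neg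
  have hpythag : ∀ A : Matrix (Fin p) (Fin p) ℝ, (∀ j, A j j = 0) →
      f A = f Θ + ∑ i, ∑ j, (sqrtSig * (A - Θ)) i j ^ 2 := fun A hA => by
    have hD : ∀ j, (A - Θ) j j = 0 := fun j => by simp [hA j, hΘdiag j]
    simpa [hf] using sum_sum_sq_mul_sub_of_isDiag hSsymm hresidual hD
  refine ⟨hΘdiag, fun A hA => ?_, fun A hA hAΘ => ?_⟩
  · rw [hpythag A hA]
    exact le_add_of_nonneg_right (by positivity)
  · have hzero : sqrtSig * (A - Θ) = 0 :=
      eq_zero_of_sum_sum_sq_eq_zero (by linarith [hpythag A hA])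
    rw [← sub_eq_zero, ← Matrix.one_mul (A - Θ), ← hKSig, ← hS2, Matrix.mul_assoc,
      Matrix.mul_assoc, hzero, Matrix.mul_zero, Matrix.mul_zero]
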